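/- arXiv:2106.07319 — 2 statements merged into one kernel-verified Lean document; each statement's English description precedes it below -/
import Mathlib

section
/- Let (X, dist) be a metric space, let m ≥ 1, k ≥ 1, ℓ ≥ 1 be integers, let ε ∈ (0,1), and let n ≥ 1. Let p, q : Fin n → X be two families of n points with a common coloring g : Fin n → Fin ℓ (so that the encoded bijection between the two point sets preserves colors), and suppose Σ_{t<n} dist(p t, q t)^m ≤ (ε/(2m))^m · ⨅_{c' : Fin k → X} cost_m(p, c'). Then for every c : Fin k → X and every nonempty set 𝐊 of color-constraint matrices (with respect to g), |cost_{m,𝐊}(p, g, c) − cost_{m,𝐊}(q, g, c)| ≤ ε · cost_{m,𝐊}(p, g, c); i.e., every movement-based (k, ℓ, ε)-color coreset is a (k, ε)-color coreset. -/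
/-- The `k`-clustering cost of points `p` with centers `c`. -/
noncomputable def clusterCost {X : Type*} [MetricSpace X] {n k : ℕ} (m : ℕ)
    (p : Fin n → X) (c : Fin k → X) : ℝ :=
  ∑ t, (⨅ i, dist (p t) (c i)) ^ m

/-- `K` is a color-constraint matrix with respect to the coloring `g`. -/
def IsColorConstraint {n k l : ℕ} (g : Fin n → Fin l) (K : Fin k → Fin l → ℕ) : Prop :=
  ∀ j, ∑ i, K i j = (Finset.univ.filter fun t => g t = j).card

/-- An assignment `α` satisfies the color-constraint matrix `K` if cluster `i`
receives exactly `K i j` points of color `j`. -/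
def satisfiesColor {n k l : ℕ} (α : Fin n → Fin k) (g : Fin n → Fin l)
    (K : Fin k → Fin l → ℕ) : Prop :=
  ∀ i j, (Finset.univ.filter fun t => α t = i ∧ g t = j).card = K i j

/-- The `K`-constrained clustering cost for colored points. -/
noncomputable def colorCost {X : Type*} [MetricSpace X] {n k l : ℕ} (m : ℕ)
    (p : Fin n → X) (g : Fin n → Fin l) (c : Fin k → X)
    (K : Fin k → Fin l → ℕ) : ℝ :=
  sInf {x | ∃ α : Fin n → Fin k, satisfiesColor α g K ∧
    x = ∑ t, dist (p t) (c (α t)) ^ m}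

/-- The cost under a color constraint, i.e. a set `Ks` of color-constraint
matrices. -/
noncomputable def colorConstraintCost {X : Type*} [MetricSpace X] {n k l : ℕ} (m : ℕ)
    (p : Fin n → X) (g : Fin n → Fin l) (c : Fin k → X)
    (Ks : Set (Fin k → Fin l → ℕ)) : ℝ :=
  sInf {x | ∃ K ∈ Ks, x = colorCost m p g c K}

/-!
Moving the points changes the `ℓ^m` distance from the point family to any family of centers
`c ∘ α` by at most the `ℓ^m` size of the movement (Minkowski), which the hypothesis bounds by
`ε / (2m)` times the cost of every assignment. Since `(1 ± ε/(2m))^m ∈ [1 - ε, 1 + ε]`, the cost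
of each assignment changes by a factor in `[1 - ε, 1 + ε]`, and such a relative bound survives
taking infima, first over the assignments satisfying `K`, then over `K ∈ Ks`.
-/

open scoped ENNReal

section PowBounds

variable {ε : ℝ}

lemma div_two_mul_le_half (m : ℕ) (hε0 : 0 ≤ ε) : ε / (2 * m) ≤ ε / 2 := by
  rcases Nat.eq_zero_or_pos m with rfl | hm
  · simp only [Nat.cast_zero, mul_zero, div_zero]
    positivity
  · have : (1 : ℝ) ≤ m := by exact_mod_cast hm
    exact div_le_div_of_nonneg_left hε0 two_pos (by linarith)

lemma one_sub_half_le_one_sub_div_pow (m : ℕ) (hε0 : 0 ≤ ε) (hε1 : ε ≤ 1) :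
    1 - ε / 2 ≤ (1 - ε / (2 * m)) ^ m := by
  have hmδ : (m : ℝ) * (ε / (2 * m)) ≤ ε / 2 := by
    rcases Nat.eq_zero_or_pos m with rfl | hm
    · simp only [Nat.cast_zero, zero_mul]
      positivity
    · rw [mul_div_assoc', mul_comm 2 (m : ℝ), mul_div_mul_left _ _ (by positivity)]
  have hδ := div_two_mul_le_half m hε0
  calc 1 - ε / 2 ≤ 1 + m * -(ε / (2 * m)) := by linarith
    _ ≤ (1 + -(ε / (2 * m))) ^ m := one_add_mul_le_pow (by linarith) m
    _ = (1 - ε / (2 * m)) ^ m := by rw [← sub_eq_add_neg]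

/-- With `δ = ε / (2m)`, `(1 + δ)^m ≤ 1 / (1 - δ)^m ≤ 1 / (1 - ε/2) ≤ 1 + ε`. -/
lemma one_add_div_pow_le_one_add (m : ℕ) (hε0 : 0 ≤ ε) (hε1 : ε ≤ 1) :
    (1 + ε / (2 * m)) ^ m ≤ 1 + ε := by
  set δ := ε / (2 * m)
  have hδ0 : 0 ≤ δ := by positivity
  have hδ : δ ≤ ε / 2 := div_two_mul_le_half m hε0
  have hprod : (1 + δ) ^ m * (1 - δ) ^ m ≤ 1 := by
    rw [← mul_pow]
    exact pow_le_one₀ (by nlinarith) (by nlinarith)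
  have hlow := one_sub_half_le_one_sub_div_pow m hε0 hε1
  nlinarith [pow_nonneg (by linarith : (0 : ℝ) ≤ 1 + δ) m]

lemma abs_pow_sub_pow_le_of_abs_sub_le {m : ℕ} {A B : ℝ} (hε0 : 0 ≤ ε) (hε1 : ε ≤ 1)
    (hA : 0 ≤ A) (hAB : |A - B| ≤ ε / (2 * m) * A) :
    |A ^ m - B ^ m| ≤ ε * A ^ m := by
  set δ := ε / (2 * m)
  have hδ : δ ≤ ε / 2 := div_two_mul_le_half m hε0
  obtain ⟨hBlow, hBup⟩ := abs_sub_le_iff.mp hAB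
  have hlow : ((1 - δ) * A) ^ m ≤ B ^ m :=
    pow_le_pow_left₀ (by nlinarith) (by linarith) m
  have hup : B ^ m ≤ ((1 + δ) * A) ^ m :=
    pow_le_pow_left₀ (by nlinarith) (by linarith) m
  rw [mul_pow] at hlow hup
  have hAm := pow_nonneg hA m
  have h1 := mul_le_mul_of_nonneg_right (one_sub_half_le_one_sub_div_pow m hε0 hε1) hAm
  have h2 := mul_le_mul_of_nonneg_right (one_add_div_pow_le_one_add m hε0 hε1) hAm
  rw [abs_sub_le_iff]
  constructor <;> nlinarith

end PowBounds

lemma PiLp.dist_pow_eq_sum {ι X : Type*} [Fintype ι] [PseudoMetricSpace X] {m : ℕ} (hm : m ≠ 0)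
    (x y : PiLp m fun _ : ι => X) : dist x y ^ m = ∑ i, dist (x i) (y i) ^ m := by
  have hm' : (0 : ℝ) < (m : ℝ≥0∞).toReal := by simpa using Nat.pos_of_ne_zero hm
  rw [PiLp.dist_eq_sum hm', ← Real.rpow_natCast, ← Real.rpow_mul (by positivity)]
  simp [hm]

/-- Minkowski's inequality, as the triangle inequality of `PiLp m`. -/
lemma abs_sum_dist_pow_sub_le {ι X : Type*} [Fintype ι] [PseudoMetricSpace X] {m : ℕ}
    (hm : 1 ≤ m) {ε : ℝ} (hε0 : 0 ≤ ε) (hε1 : ε ≤ 1) (p q r : ι → X)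
    (hpq : ∑ i, dist (p i) (q i) ^ m ≤ (ε / (2 * m)) ^ m * ∑ i, dist (p i) (r i) ^ m) :
    |∑ i, dist (p i) (r i) ^ m - ∑ i, dist (q i) (r i) ^ m| ≤
      ε * ∑ i, dist (p i) (r i) ^ m := by
  have : Fact (1 ≤ (m : ℝ≥0∞)) := ⟨by exact_mod_cast hm⟩
  have hm0 : m ≠ 0 := by omega
  let toLp : (ι → X) → PiLp m fun _ : ι => X := WithLp.toLp m
  have hpow (x y : ι → X) : dist (toLp x) (toLp y) ^ m = ∑ i, dist (x i) (y i) ^ m :=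
    PiLp.dist_pow_eq_sum hm0 _ _
  simp only [← hpow, ← mul_pow] at hpq ⊢
  refine abs_pow_sub_pow_le_of_abs_sub_le hε0 hε1 dist_nonneg ?_
  exact (abs_dist_sub_le _ _ _).trans
    ((pow_le_pow_iff_left₀ dist_nonneg (by positivity) hm0).mp hpq)

lemma abs_iInf_sub_iInf_le_mul {ι : Sort*} {f g : ι → ℝ} {ε : ℝ} (hε0 : 0 ≤ ε) (hε1 : ε ≤ 1)
    (hf : ∀ i, 0 ≤ f i) (hfg : ∀ i, |f i - g i| ≤ ε * f i) :
    |(⨅ i, f i) - ⨅ i, g i| ≤ ε * ⨅ i, f i := by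
  have hlow (i : ι) : (1 - ε) * f i ≤ g i := by linarith [(abs_sub_le_iff.mp (hfg i)).1]
  have hup (i : ι) : g i ≤ (1 + ε) * f i := by linarith [(abs_sub_le_iff.mp (hfg i)).2]
  have hlow_nonneg (i : ι) : 0 ≤ (1 - ε) * f i := mul_nonneg (by linarith) (hf i)
  have h1 : (1 - ε) * ⨅ i, f i ≤ ⨅ i, g i := by
    rw [Real.mul_iInf_of_nonneg (by linarith)]
    exact ciInf_mono ⟨0, by rintro _ ⟨i, rfl⟩; exact hlow_nonneg i⟩ hlow
  have h2 : ⨅ i, g i ≤ (1 + ε) * ⨅ i, f i := by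
    rw [Real.mul_iInf_of_nonneg (by linarith)]
    exact ciInf_mono ⟨0, by rintro _ ⟨i, rfl⟩; exact (hlow_nonneg i).trans (hlow i)⟩ hup
  rw [abs_sub_le_iff]
  constructor <;> linarith

section Clustering

variable {X : Type*} [MetricSpace X] {n k l m : ℕ}

lemma clusterCost_nonneg (p : Fin n → X) (c : Fin k → X) : 0 ≤ clusterCost m p c :=
  Finset.sum_nonneg fun _ _ => pow_nonneg (Real.iInf_nonneg fun _ => dist_nonneg) m

lemma clusterCost_le_sum_dist_pow (p : Fin n → X) (c : Fin k → X) (α : Fin n → Fin k) :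
    clusterCost m p c ≤ ∑ t, dist (p t) (c (α t)) ^ m :=
  Finset.sum_le_sum fun t _ => pow_le_pow_left₀ (Real.iInf_nonneg fun _ => dist_nonneg)
    (ciInf_le ⟨0, by rintro _ ⟨i, rfl⟩; exact dist_nonneg⟩ (α t)) m

lemma iInf_clusterCost_le_sum_dist_pow (p : Fin n → X) (c : Fin k → X) (α : Fin n → Fin k) :
    ⨅ c' : Fin k → X, clusterCost m p c' ≤ ∑ t, dist (p t) (c (α t)) ^ m :=
  (ciInf_le ⟨0, by rintro _ ⟨c', rfl⟩; exact clusterCost_nonneg p c'⟩ c).trans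
    (clusterCost_le_sum_dist_pow p c α)

lemma colorCost_eq_iInf (p : Fin n → X) (g : Fin n → Fin l) (c : Fin k → X)
    (K : Fin k → Fin l → ℕ) :
    colorCost m p g c K =
      ⨅ α : {α // satisfiesColor α g K}, ∑ t, dist (p t) (c (α.1 t)) ^ m := by
  rw [colorCost, iInf, Set.range]
  congr 1
  ext x
  simp [eq_comm]

lemma colorConstraintCost_eq_iInf (p : Fin n → X) (g : Fin n → Fin l) (c : Fin k → X)
    (Ks : Set (Fin k → Fin l → ℕ)) :
    colorConstraintCost m p g c Ks = ⨅ K : Ks, colorCost m p g c K := by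
  rw [colorConstraintCost, iInf, Set.range]
  congr 1
  ext x
  simp [eq_comm]

lemma colorCost_nonneg (p : Fin n → X) (g : Fin n → Fin l) (c : Fin k → X)
    (K : Fin k → Fin l → ℕ) : 0 ≤ colorCost m p g c K := by
  rw [colorCost_eq_iInf]
  exact Real.iInf_nonneg fun α => by positivity

lemma abs_colorCost_sub_le (hm : 1 ≤ m) {ε : ℝ} (hε0 : 0 ≤ ε) (hε1 : ε ≤ 1)
    (p q : Fin n → X) (g : Fin n → Fin l)
    (hmove : ∑ t, dist (p t) (q t) ^ m ≤
      (ε / (2 * m)) ^ m * ⨅ c' : Fin k → X, clusterCost m p c')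
    (c : Fin k → X) (K : Fin k → Fin l → ℕ) :
    |colorCost m p g c K - colorCost m q g c K| ≤ ε * colorCost m p g c K := by
  simp only [colorCost_eq_iInf]
  refine abs_iInf_sub_iInf_le_mul hε0 hε1 (fun α => by positivity) fun α => ?_
  refine abs_sum_dist_pow_sub_le hm hε0 hε1 p q (c ∘ α.1) (hmove.trans ?_)
  exact mul_le_mul_of_nonneg_left (iInf_clusterCost_le_sum_dist_pow p c α.1) (by positivity)

end Clustering

theorem movementBased_color_coreset_is_color_coreset_general {X : Type*} [MetricSpace X]
    {n k l m : ℕ} (hm : 1 ≤ m)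
    {ε : ℝ} (hε : ε ∈ Set.Ioo (0 : ℝ) 1)
    (p q : Fin n → X) (g : Fin n → Fin l)
    (hmove : ∑ t, dist (p t) (q t) ^ m ≤
      (ε / (2 * m)) ^ m * ⨅ c' : Fin k → X, clusterCost m p c') :
    ∀ c : Fin k → X, ∀ Ks : Set (Fin k → Fin l → ℕ), Ks.Nonempty →
      (∀ K ∈ Ks, IsColorConstraint g K) →
      |colorConstraintCost m p g c Ks - colorConstraintCost m q g c Ks| ≤
        ε * colorConstraintCost m p g c Ks := by
  intro c Ks _ _
  simp only [colorConstraintCost_eq_iInf]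
  exact abs_iInf_sub_iInf_le_mul hε.1.le hε.2.le (fun K => colorCost_nonneg p g c K)
    fun K => abs_colorCost_sub_le hm hε.1.le hε.2.le p q g hmove c K

theorem movementBased_color_coreset_is_color_coreset {X : Type*} [MetricSpace X]
    {n k l m : ℕ} (hm : 1 ≤ m) (hk : 1 ≤ k) (hl : 1 ≤ l) (hn : 1 ≤ n)
    {ε : ℝ} (hε : ε ∈ Set.Ioo (0 : ℝ) 1)
    (p q : Fin n → X) (g : Fin n → Fin l)
    (hmove : ∑ t, dist (p t) (q t) ^ m ≤
      (ε / (2 * m)) ^ m * ⨅ c' : Fin k → X, clusterCost m p c') :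
    ∀ c : Fin k → X, ∀ Ks : Set (Fin k → Fin l → ℕ), Ks.Nonempty →
      (∀ K ∈ Ks, IsColorConstraint g K) →
      |colorConstraintCost m p g c Ks - colorConstraintCost m q g c Ks| ≤
        ε * colorConstraintCost m p g c Ks :=
  movementBased_color_coreset_is_color_coreset_general hm hε p q g hmove
end

section
/- Let ι be a nonempty finite type, s : ι → EuclideanSpace ℝ (Fin d) a family of points, k ≥ 1 an integer, and for each i < k let w_i : ι → ℕ be a weight function with positive total weight W_i = Σ_j w_i j ≥ 1; let μ_i = (1/W_i) · Σ_j (w_i j : ℝ) • s j and V_i = Σ_j (w_i j : ℝ) · ‖s j − μ_i‖². Then for every real ε > 0 and every integer m with m > 1/ε, there exist tuples r_1, …, r_k : Fin m → ι such that Σ_{i<k} Σ_j (w_i j : ℝ) · ‖s j − μ(r_i)‖² ≤ (1 + ε) · Σ_{i<k} V_i, where μ(r_i) = (1/m) · Σ_{t<m} s (r_i t). In other words, replacing the optimal centroid of each cluster of a weighted k-clustering by the centroid of a suitable multiset of m points drawn from the input increases the total k-means cost by a factor of at most 1 + ε. -/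
/-- The total weight `W = Σ_i w i`. -/
noncomputable def totalWeight {ι : Type*} [Fintype ι] (w : ι → ℕ) : ℝ :=
  ∑ i, (w i : ℝ)

/-- The weighted mean `μ_w = (1/W) · Σ_i w i • s i`. -/
noncomputable def weightedMean {d : ℕ} {ι : Type*} [Fintype ι]
    (s : ι → EuclideanSpace ℝ (Fin d)) (w : ι → ℕ) : EuclideanSpace ℝ (Fin d) :=
  (1 / totalWeight w) • ∑ i, (w i : ℝ) • s i

/-- The total weighted squared distance to the weighted mean,
`V = Σ_i w i · ‖s i − μ_w‖²`. -/
noncomputable def weightedVar {d : ℕ} {ι : Type*} [Fintype ι]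
    (s : ι → EuclideanSpace ℝ (Fin d)) (w : ι → ℕ) : ℝ :=
  ∑ i, (w i : ℝ) * ‖s i - weightedMean s w‖ ^ 2

/-- The probability mass function `f(i) = w i / W`. -/
noncomputable def pmfWeight {ι : Type*} [Fintype ι] (w : ι → ℕ) (i : ι) : ℝ :=
  (w i : ℝ) / totalWeight w

/-- The product probability mass on `Fin m → ι` under which the `m` coordinates
are independent samples distributed according to `pmfWeight w`. -/
noncomputable def prodProb {ι : Type*} [Fintype ι] (w : ι → ℕ) {m : ℕ}
    (r : Fin m → ι) : ℝ :=
  ∏ j, pmfWeight w (r j)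

/-- The sample mean `μ(r) = (1/m) · Σ_j s (r j)`. -/
noncomputable def sampleMean {d : ℕ} {ι : Type*} {m : ℕ}
    (s : ι → EuclideanSpace ℝ (Fin d)) (r : Fin m → ι) : EuclideanSpace ℝ (Fin d) :=
  (1 / (m : ℝ)) • ∑ j, s (r j)

/-!
Draw the `m` points of cluster `i` independently, point `j` with probability `w_i j / W_i`.
The cost of a centre `c` is `V_i + W_i ‖c - μ_i‖²`, and the mean of `m` independent samples
deviates from `μ_i` by `V_i / (m W_i)` in mean square, so the expected cost of the sample-mean
centre is `(1 + 1/m) V_i`. Some sample does at least as well as this expectation, and `1/m < ε`.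
-/

open Finset
open scoped RealInnerProductSpace

section ProductWeights

variable {ι : Type*} [Fintype ι]

theorem sum_prod_eq_one {p : ι → ℝ} (hp : ∑ i, p i = 1) (m : ℕ) :
    ∑ r : Fin m → ι, ∏ t, p (r t) = 1 := by
  rw [← Fintype.prod_sum]
  simp [hp]

theorem sum_prod_mul_fin_succ (p : ι → ℝ) {m : ℕ} (F : (Fin (m + 1) → ι) → ℝ) :
    ∑ r : Fin (m + 1) → ι, (∏ t, p (r t)) * F r =
      ∑ i, p i * ∑ r : Fin m → ι, (∏ t, p (r t)) * F (Fin.cons i r) := by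
  rw [← (Fin.consEquiv fun _ => ι).sum_comp, Fintype.sum_prod_type]
  simp [Fin.prod_univ_succ, mul_sum, mul_assoc, Fin.consEquiv]

theorem exists_le_sum_mul {α : Type*} [Fintype α] [Nonempty α] {p : α → ℝ}
    (hp₀ : ∀ a, 0 ≤ p a) (hp : ∑ a, p a = 1) (F : α → ℝ) : ∃ a, F a ≤ ∑ b, p b * F b := by
  obtain ⟨a, ha⟩ := Finite.exists_min F
  refine ⟨a, ?_⟩
  calc F a = ∑ b, p b * F a := by rw [← sum_mul, hp, one_mul]
    _ ≤ ∑ b, p b * F b := sum_le_sum fun b _ => mul_le_mul_of_nonneg_left (ha b) (hp₀ b)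

variable {E : Type*} [NormedAddCommGroup E] [InnerProductSpace ℝ E]

theorem sum_smul_sub_sum_smul_eq_zero {p : ι → ℝ} (hp : ∑ i, p i = 1) (x : ι → E) :
    ∑ i, p i • (x i - ∑ j, p j • x j) = 0 := by
  simp [smul_sub, sum_sub_distrib, ← sum_smul, hp]

theorem sum_mul_norm_sub_sq {p : ι → ℝ} (hp : ∑ i, p i = 1) (x : ι → E) (c : E) :
    ∑ i, p i * ‖x i - c‖ ^ 2 =
      ∑ i, p i * ‖x i - ∑ j, p j • x j‖ ^ 2 + ‖c - ∑ j, p j • x j‖ ^ 2 := by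
  set μ := ∑ j, p j • x j
  have hcross : ∑ i, p i * ⟪x i - μ, c - μ⟫ = 0 := by
    simp_rw [← real_inner_smul_left, ← sum_inner]
    rw [sum_smul_sub_sum_smul_eq_zero hp x, inner_zero_left]
  have hexpand : ∀ i, p i * ‖x i - c‖ ^ 2 =
      p i * ‖x i - μ‖ ^ 2 - 2 * (p i * ⟪x i - μ, c - μ⟫) + p i * ‖c - μ‖ ^ 2 := by
    intro i
    rw [← sub_sub_sub_cancel_right (x i) c μ, norm_sub_sq_real]
    ring
  simp_rw [hexpand, sum_add_distrib, sum_sub_distrib, ← mul_sum, ← sum_mul, hcross, hp]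
  ring

/-- `∏ t, p (r t)` is the law of `m` independent draws from `p`: the variance of a sum of
independent centred vectors is the sum of their variances. -/
theorem sum_prod_mul_norm_sum_sq {p : ι → ℝ} (hp : ∑ i, p i = 1) {x : ι → E}
    (hx : ∑ i, p i • x i = 0) (m : ℕ) :
    ∑ r : Fin m → ι, (∏ t, p (r t)) * ‖∑ t, x (r t)‖ ^ 2 = m * ∑ i, p i * ‖x i‖ ^ 2 := by
  induction m with
  | zero => simp
  | succ m ih =>
    set Y := ∑ r : Fin m → ι, (∏ t, p (r t)) • ∑ t, x (r t)
    have hsplit : ∀ i, ∑ r : Fin m → ι, (∏ t, p (r t)) * ‖x i + ∑ t, x (r t)‖ ^ 2 =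
        ‖x i‖ ^ 2 + 2 * ⟪x i, Y⟫ + m * ∑ i, p i * ‖x i‖ ^ 2 := by
      intro i
      have hcross : ∑ r : Fin m → ι, (∏ t, p (r t)) * (2 * ⟪x i, ∑ t, x (r t)⟫) =
          2 * ⟪x i, Y⟫ := by
        rw [inner_sum, mul_sum]
        exact sum_congr rfl fun r _ => by rw [real_inner_smul_right]; ring
      simp_rw [norm_add_sq_real, mul_add, sum_add_distrib, ← sum_mul, sum_prod_eq_one hp, ih,
        hcross, one_mul]
    have hmean_cross : ∑ i, p i * (2 * ⟪x i, Y⟫) = 2 * ⟪∑ i, p i • x i, Y⟫ := by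
      rw [sum_inner, mul_sum]
      exact sum_congr rfl fun i _ => by rw [real_inner_smul_left]; ring
    calc ∑ r : Fin (m + 1) → ι, (∏ t, p (r t)) * ‖∑ t, x (r t)‖ ^ 2
        = ∑ i, p i * (‖x i‖ ^ 2 + 2 * ⟪x i, Y⟫ + m * ∑ i, p i * ‖x i‖ ^ 2) := by
          simp_rw [sum_prod_mul_fin_succ, Fin.sum_univ_succ, Fin.cons_zero, Fin.cons_succ, hsplit]
      _ = ∑ i, p i * ‖x i‖ ^ 2 + 2 * ⟪∑ i, p i • x i, Y⟫
            + (∑ i, p i) * (m * ∑ i, p i * ‖x i‖ ^ 2) := by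
          simp_rw [mul_add, sum_add_distrib, hmean_cross, ← sum_mul]
      _ = (m + 1 : ℕ) * ∑ i, p i * ‖x i‖ ^ 2 := by
          rw [hx, inner_zero_left, hp]; push_cast; ring

end ProductWeights

theorem sampleMean_sub {d : ℕ} {ι : Type*} {m : ℕ} (hm : m ≠ 0)
    (s : ι → EuclideanSpace ℝ (Fin d)) (r : Fin m → ι) (c : EuclideanSpace ℝ (Fin d)) :
    sampleMean s r - c = (1 / (m : ℝ)) • ∑ t, (s (r t) - c) := by
  rw [sampleMean, sum_sub_distrib, smul_sub, sum_const, card_univ, Fintype.card_fin,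
    ← Nat.cast_smul_eq_nsmul ℝ, smul_smul, one_div_mul_cancel (Nat.cast_ne_zero.mpr hm),
    one_smul]

section WeightedClusters

variable {d : ℕ} {ι : Type*} [Fintype ι] {w : ι → ℕ}

theorem totalWeight_pos (hw : 0 < ∑ j, w j) : 0 < totalWeight w := by
  unfold totalWeight
  exact_mod_cast hw

theorem pmfWeight_nonneg (w : ι → ℕ) (j : ι) : 0 ≤ pmfWeight w j :=
  div_nonneg (Nat.cast_nonneg _) (sum_nonneg fun _ _ => Nat.cast_nonneg _)

theorem sum_pmfWeight (hw : 0 < ∑ j, w j) : ∑ j, pmfWeight w j = 1 := by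
  simp only [pmfWeight, ← sum_div]
  exact div_self (totalWeight_pos hw).ne'

theorem sum_natCast_mul_eq_totalWeight_mul (hw : 0 < ∑ j, w j) (f : ι → ℝ) :
    ∑ j, (w j : ℝ) * f j = totalWeight w * ∑ j, pmfWeight w j * f j := by
  have hW := (totalWeight_pos hw).ne'
  rw [mul_sum]
  exact sum_congr rfl fun j _ => by rw [pmfWeight]; field_simp

theorem weightedMean_eq_sum_pmfWeight_smul (s : ι → EuclideanSpace ℝ (Fin d)) (w : ι → ℕ) :
    weightedMean s w = ∑ j, pmfWeight w j • s j := by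
  rw [weightedMean, smul_sum]
  exact sum_congr rfl fun j _ => by rw [smul_smul, pmfWeight, one_div_mul_eq_div]

theorem sum_prodProb_mul_norm_sampleMean_sub_sq (hw : 0 < ∑ j, w j) {m : ℕ} (hm : m ≠ 0)
    (s : ι → EuclideanSpace ℝ (Fin d)) :
    ∑ r : Fin m → ι, prodProb w r * ‖sampleMean s r - weightedMean s w‖ ^ 2 =
      1 / m * ∑ j, pmfWeight w j * ‖s j - weightedMean s w‖ ^ 2 := by
  have hcenter : ∑ j, pmfWeight w j • (s j - weightedMean s w) = 0 := by
    rw [weightedMean_eq_sum_pmfWeight_smul]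
    exact sum_smul_sub_sum_smul_eq_zero (sum_pmfWeight hw) s
  simp_rw [sampleMean_sub hm, norm_smul, mul_pow,
    Real.norm_of_nonneg (by positivity : (0 : ℝ) ≤ 1 / m), mul_left_comm (prodProb w _), ← mul_sum]
  simp only [prodProb]
  rw [sum_prod_mul_norm_sum_sq (sum_pmfWeight hw) hcenter]
  field_simp

theorem sum_prodProb_mul_cost_sampleMean (hw : 0 < ∑ j, w j) {m : ℕ} (hm : m ≠ 0)
    (s : ι → EuclideanSpace ℝ (Fin d)) :
    ∑ r : Fin m → ι, prodProb w r * ∑ j, (w j : ℝ) * ‖s j - sampleMean s r‖ ^ 2 =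
      (1 + 1 / m) * weightedVar s w := by
  set μ := weightedMean s w
  set σ2 := ∑ j, pmfWeight w j * ‖s j - μ‖ ^ 2
  have hcost : ∀ c, ∑ j, (w j : ℝ) * ‖s j - c‖ ^ 2 = totalWeight w * (σ2 + ‖c - μ‖ ^ 2) := by
    intro c
    rw [sum_natCast_mul_eq_totalWeight_mul hw, sum_mul_norm_sub_sq (sum_pmfWeight hw),
      ← weightedMean_eq_sum_pmfWeight_smul]
  have hprob : ∑ r : Fin m → ι, prodProb w r = 1 := sum_prod_eq_one (sum_pmfWeight hw) m
  calc ∑ r : Fin m → ι, prodProb w r * ∑ j, (w j : ℝ) * ‖s j - sampleMean s r‖ ^ 2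
      = ∑ r : Fin m → ι, (totalWeight w * σ2 * prodProb w r
          + totalWeight w * (prodProb w r * ‖sampleMean s r - μ‖ ^ 2)) :=
        sum_congr rfl fun r _ => by rw [hcost]; ring
    _ = totalWeight w * σ2 + totalWeight w * (1 / m * σ2) := by
        rw [sum_add_distrib, ← mul_sum, ← mul_sum, hprob,
          sum_prodProb_mul_norm_sampleMean_sub_sq hw hm, mul_one]
    _ = (1 + 1 / m) * weightedVar s w := by
        rw [weightedVar, sum_natCast_mul_eq_totalWeight_mul hw]
        ring

theorem exists_sampleMean_cost_le [Nonempty ι] (hw : 0 < ∑ j, w j) {m : ℕ} (hm : m ≠ 0)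
    (s : ι → EuclideanSpace ℝ (Fin d)) :
    ∃ r : Fin m → ι,
      ∑ j, (w j : ℝ) * ‖s j - sampleMean s r‖ ^ 2 ≤ (1 + 1 / m) * weightedVar s w := by
  rw [← sum_prodProb_mul_cost_sampleMean hw hm]
  exact exists_le_sum_mul (fun r => prod_nonneg fun t _ => pmfWeight_nonneg w (r t))
    (sum_prod_eq_one (sum_pmfWeight hw) m) _

end WeightedClusters

theorem exists_good_sample_centers_for_clustering_general {d : ℕ} {ι : Type*}
    [Fintype ι] [Nonempty ι] (s : ι → EuclideanSpace ℝ (Fin d))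
    {k : ℕ} (w : Fin k → ι → ℕ) (hw : ∀ i, 1 ≤ ∑ j, w i j)
    {ε : ℝ} (hε : 0 < ε) {m : ℕ} (hm : 1 / ε < (m : ℝ)) :
    ∃ r : Fin k → (Fin m → ι),
      ∑ i, ∑ j, (w i j : ℝ) * ‖s j - sampleMean s (r i)‖ ^ 2 ≤
        (1 + ε) * ∑ i, weightedVar s (w i) := by
  have hm_pos : (0 : ℝ) < m := (one_div_pos.mpr hε).trans hm
  have hm_inv : 1 / (m : ℝ) < ε := (one_div_lt hε hm_pos).mp hm
  choose r hr using fun i => exists_sampleMean_cost_le (hw i) (Nat.cast_pos.mp hm_pos).ne' s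
  refine ⟨r, ?_⟩
  rw [mul_sum]
  refine sum_le_sum fun i _ => (hr i).trans ?_
  have hV : 0 ≤ weightedVar s (w i) := sum_nonneg fun j _ => by positivity
  gcongr

theorem exists_good_sample_centers_for_clustering {d : ℕ} {ι : Type*}
    [Fintype ι] [Nonempty ι] (s : ι → EuclideanSpace ℝ (Fin d))
    {k : ℕ} (hk : 1 ≤ k) (w : Fin k → ι → ℕ) (hw : ∀ i, 1 ≤ ∑ j, w i j)
    {ε : ℝ} (hε : 0 < ε) {m : ℕ} (hm : 1 / ε < (m : ℝ)) :
    ∃ r : Fin k → (Fin m → ι),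
      ∑ i, ∑ j, (w i j : ℝ) * ‖s j - sampleMean s (r i)‖ ^ 2 ≤
        (1 + ε) * ∑ i, weightedVar s (w i) :=
  exists_good_sample_centers_for_clustering_general s w hw hε hm
end
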